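/- Let q be a natural number and define f : ℝ → ℝ by f(x) = ∏_{n=0}^{q−1} (x − n). Then for every real x, (f'(x))² − f(x)·f''(x) = ∑_{α=0}^{q−1} ( ∏_{n ∈ {0,…,q−1}, n ≠ α} (x − n) )²; in particular this difference is a sum of squares and hence nonnegative for all x. -/

import Mathlib

open Finset

variable {ι : Type*} [DecidableEq ι]

theorem Finset.prod_erase_mul_prod_erase {R : Type*} [CommMonoid R] {s : Finset ι} {i j : ι}
    (hj : j ∈ s.erase i) (g : ι → R) :
    (∏ k ∈ s.erase i, g k) * ∏ k ∈ s.erase j, g k =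
      (∏ k ∈ s, g k) * ∏ k ∈ (s.erase i).erase j, g k := by
  rw [← mul_prod_erase _ _ hj, ← mul_prod_erase _ _ (mem_of_mem_erase hj)]
  exact mul_right_comm _ _ _

/-- Read with `f = ∏ gᵢ` and `f'`, `f''` its formal derivatives: the cross terms `i ≠ j` of `f'²`
are exactly cancelled by `f f''`. -/
theorem Finset.sq_sum_prod_erase_sub_prod_mul_sum_sum_prod_erase_erase {R : Type*} [CommRing R]
    (s : Finset ι) (g : ι → R) :
    (∑ i ∈ s, ∏ j ∈ s.erase i, g j) ^ 2 -
        (∏ i ∈ s, g i) * ∑ i ∈ s, ∑ j ∈ s.erase i, ∏ k ∈ (s.erase i).erase j, g k =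
      ∑ i ∈ s, (∏ j ∈ s.erase i, g j) ^ 2 := by
  have hrow : ∀ i ∈ s, ∑ j ∈ s, (∏ k ∈ s.erase i, g k) * ∏ k ∈ s.erase j, g k =
      (∏ k ∈ s.erase i, g k) ^ 2 +
        (∏ k ∈ s, g k) * ∑ j ∈ s.erase i, ∏ k ∈ (s.erase i).erase j, g k := by
    intro i hi
    rw [← add_sum_erase _ _ hi, mul_sum, sq]
    exact congrArg _ (sum_congr rfl fun j hj => prod_erase_mul_prod_erase hj g)
  rw [sq, sum_mul_sum, sum_congr rfl hrow, sum_add_distrib, ← mul_sum, add_sub_cancel_right]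

variable {𝕜 : Type*} [NontriviallyNormedField 𝕜]

theorem deriv_prod_sub (s : Finset ι) (a : ι → 𝕜) :
    deriv (fun x => ∏ i ∈ s, (x - a i)) = fun x => ∑ i ∈ s, ∏ j ∈ s.erase i, (x - a j) := by
  funext x
  rw [deriv_fun_finsetProd fun i _ => by fun_prop]
  simp

theorem deriv_deriv_prod_sub (s : Finset ι) (a : ι → 𝕜) :
    deriv (deriv fun x => ∏ i ∈ s, (x - a i)) =
      fun x => ∑ i ∈ s, ∑ j ∈ s.erase i, ∏ k ∈ (s.erase i).erase j, (x - a k) := by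
  funext x
  rw [deriv_prod_sub, deriv_fun_sum fun i _ => by fun_prop]
  simp only [deriv_prod_sub]

theorem stmt7 (q : ℕ) (f : ℝ → ℝ)
    (hf : f = fun x => ∏ n ∈ Finset.range q, (x - (n : ℝ))) (x : ℝ) :
    (deriv f x) ^ 2 - f x * deriv (deriv f) x =
        ∑ α ∈ Finset.range q, (∏ n ∈ (Finset.range q).erase α, (x - (n : ℝ))) ^ 2 ∧
      0 ≤ (deriv f x) ^ 2 - f x * deriv (deriv f) x := by
  have hsos : (deriv f x) ^ 2 - f x * deriv (deriv f) x =
      ∑ α ∈ range q, (∏ n ∈ (range q).erase α, (x - (n : ℝ))) ^ 2 := by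
    subst hf
    rw [deriv_deriv_prod_sub, deriv_prod_sub]
    exact sq_sum_prod_erase_sub_prod_mul_sum_sum_prod_erase_erase _ _
  exact ⟨hsos, hsos ▸ sum_nonneg fun α _ => sq_nonneg _⟩
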